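/- arXiv:1008.2830 — 6 statements merged into one kernel-verified Lean document; each statement's English description precedes it below -/
import Mathlib

section
/- Define a(r) = (2θ(r) − 2β(r))/(4π) where θ(r) = 2·arctan(tan(πα)·√(1−r²)) and β(r) = 2r·sin(πα)·arctan(√(1−r²)/(r·cos(πα))), for 0 < r < 1 and 0 < α < 1/2. Then a''(r) = sin(2πα) / (π·√(1−r²)·(2 − r²·sin(2πα)²))-type expression is positive, and in particular a is convex on (0,1), so a(r) ≥ a(0) + r·a'(0) + (r²/2)·a''(0) = α − (r/2)·sin(πα) + (r²/(4π))·sin(2πα). -/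
/-!
Differentiating, the `θ`-term cancels against part of the derivative of `β`, leaving
`a'(r) = -(sin πα / π) · arctan (√(1 - r²) / (r cos πα))` on `(0, 1)`. The arctan argument
decreases in `r`, so `a'` increases and `a` is convex. For the lower bound, write
`arctan u = π/2 - arctan (1/u)`; since `√(1 - r²) ≤ 1 - r²/2 ≤ cos r ≤ cos (r cos πα)` and
`tan x ≤ x / cos x`, we get `arctan (√(1 - r²) / (r cos πα)) ≤ π/2 - r cos πα`, i.e. `a'`
dominates the derivative of the quadratic on the right, and both sides equal `α` at `r = 0`.
-/

open Real Set Filter Topology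

/-- The function `a` of the statement, with `θ` and `β` substituted. -/
noncomputable def wedgeArea (α r : ℝ) : ℝ :=
  (2 * (2 * arctan (tan (π * α) * √(1 - r ^ 2))) -
    2 * (2 * r * sin (π * α) * arctan (√(1 - r ^ 2) / (r * cos (π * α))))) / (4 * π)

theorem continuous_mul_arctan {g : ℝ → ℝ} (hg : ∀ x ≠ 0, ContinuousAt g x) :
    Continuous fun x => x * arctan (g x) := by
  refine continuous_iff_continuousAt.2 fun x => ?_
  rcases eq_or_ne x 0 with rfl | hx
  · have hbound : ∀ y, ‖y * arctan (g y)‖ ≤ π / 2 * ‖y‖ := fun y => by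
      rw [norm_mul, mul_comm]
      gcongr
      exact (abs_lt.2 ⟨neg_pi_div_two_lt_arctan _, arctan_lt_pi_div_two _⟩).le
    have hlim : Tendsto (fun y : ℝ => π / 2 * ‖y‖) (𝓝 0) (𝓝 0) :=
      (by fun_prop : Continuous fun y : ℝ => π / 2 * ‖y‖).tendsto' 0 0 (by simp)
    simpa [ContinuousAt] using squeeze_zero_norm hbound hlim
  · exact continuousAt_id.mul (continuous_arctan.continuousAt.comp (hg x hx))

theorem continuous_wedgeArea (α : ℝ) : Continuous (wedgeArea α) := by
  have hβ : Continuous fun r : ℝ => r * arctan (√(1 - r ^ 2) / (r * cos (π * α))) := by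
    simp_rw [div_mul_eq_div_div_swap]
    exact continuous_mul_arctan fun r hr => by fun_prop (disch := exact hr)
  have h : wedgeArea α = fun r => (4 * arctan (tan (π * α) * √(1 - r ^ 2)) -
      4 * sin (π * α) * (r * arctan (√(1 - r ^ 2) / (r * cos (π * α))))) / (4 * π) := by
    funext r
    unfold wedgeArea
    ring
  rw [h]
  fun_prop

theorem hasDerivAt_sqrt_one_sub_sq {r : ℝ} (hr : r ^ 2 < 1) :
    HasDerivAt (fun r => √(1 - r ^ 2)) (-r / √(1 - r ^ 2)) r := by
  have h := ((hasDerivAt_pow 2 r).const_sub 1).sqrt (by linarith)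
  convert h using 1
  field_simp
  ring

theorem hasDerivAt_arctan_mul_sqrt_one_sub_sq (t : ℝ) {r : ℝ} (hr : r ^ 2 < 1) :
    HasDerivAt (fun r => arctan (t * √(1 - r ^ 2)))
      (-(t * r) / (√(1 - r ^ 2) * (1 + t ^ 2 * (1 - r ^ 2)))) r := by
  have h := ((hasDerivAt_sqrt_one_sub_sq hr).const_mul t).arctan
  convert h using 1
  rw [mul_pow, sq_sqrt (by linarith)]
  field_simp

theorem hasDerivAt_mul_arctan_sqrt_one_sub_sq_div {c r : ℝ} (hc : c ≠ 0) (hr0 : r ≠ 0)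
    (hr : r ^ 2 < 1) :
    HasDerivAt (fun r => r * arctan (√(1 - r ^ 2) / (r * c)))
      (arctan (√(1 - r ^ 2) / (r * c)) -
        r * c / (√(1 - r ^ 2) * (1 - r ^ 2 + r ^ 2 * c ^ 2))) r := by
  have hs2 : √(1 - r ^ 2) ^ 2 = 1 - r ^ 2 := sq_sqrt (by linarith)
  have hq := (hasDerivAt_sqrt_one_sub_sq hr).fun_div ((hasDerivAt_id' r).mul_const c)
    (mul_ne_zero hr0 hc)
  have hD : 0 < 1 - r ^ 2 + r ^ 2 * c ^ 2 := add_pos_of_pos_of_nonneg (by linarith) (by positivity)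
  refine ((hasDerivAt_id' r).fun_mul hq.arctan).congr_deriv ?_
  field_simp
  rw [hs2]
  ring

theorem hasDerivAt_wedgeArea {α r : ℝ} (hc : cos (π * α) ≠ 0) (hr0 : r ≠ 0) (hr : r ^ 2 < 1) :
    HasDerivAt (wedgeArea α)
      (-(sin (π * α) / π) * arctan (√(1 - r ^ 2) / (r * cos (π * α)))) r := by
  have hθ := hasDerivAt_arctan_mul_sqrt_one_sub_sq (tan (π * α)) hr
  have hβ := hasDerivAt_mul_arctan_sqrt_one_sub_sq_div hc hr0 hr
  have htan : 1 + tan (π * α) ^ 2 * (1 - r ^ 2) =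
      (1 - r ^ 2 + r ^ 2 * cos (π * α) ^ 2) / cos (π * α) ^ 2 := by
    rw [tan_eq_sin_div_cos]
    field_simp
    linear_combination (1 - r ^ 2) * sin_sq_add_cos_sq (π * α)
  refine ((((hθ.const_mul 4).fun_sub (hβ.const_mul (4 * sin (π * α)))).div_const
    (4 * π)).congr_deriv ?_).congr_of_eventuallyEq (Eventually.of_forall fun r => ?_)
  · rw [htan, tan_eq_sin_div_cos]
    field_simp
    ring
  · simp only [wedgeArea]
    ring

theorem sqrt_one_sub_sq_le_cos {r : ℝ} (hr : r ^ 2 ≤ 2) : √(1 - r ^ 2) ≤ cos r :=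
  (sqrt_le_iff.2 ⟨by linarith, by nlinarith⟩).trans one_sub_sq_div_two_le_cos

theorem le_arctan_div {x s : ℝ} (hx0 : 0 ≤ x) (hx : x < π / 2) (hs : 0 < s) (hsx : s ≤ cos x) :
    x ≤ arctan (x / s) := by
  calc x = arctan (tan x) := (arctan_tan (by linarith [pi_pos]) hx).symm
    _ ≤ arctan (x / s) := by
      rw [arctan_le_arctan_iff, tan_eq_sin_div_cos]
      exact div_le_div₀ hx0 (sin_le hx0) hs hsx

theorem arctan_sqrt_one_sub_sq_div_le {c r : ℝ} (hc0 : 0 < c) (hc1 : c ≤ 1) (hr0 : 0 < r)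
    (hr1 : r < 1) : arctan (√(1 - r ^ 2) / (r * c)) ≤ π / 2 - r * c := by
  have hs : 0 < √(1 - r ^ 2) := sqrt_pos.2 (by nlinarith)
  have hrc : r * c ≤ r := mul_le_of_le_one_right hr0.le hc1
  have hcos : √(1 - r ^ 2) ≤ cos (r * c) :=
    (sqrt_one_sub_sq_le_cos (by nlinarith)).trans
      (cos_le_cos_of_nonneg_of_le_pi (by positivity) (by linarith [pi_gt_three]) hrc)
  have h := le_arctan_div (by positivity) (by linarith [pi_gt_three]) hs hcos
  rw [← inv_div, arctan_inv_of_pos (by positivity)] at h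
  linarith

theorem antitoneOn_sqrt_one_sub_sq_div {c : ℝ} (hc : 0 < c) :
    AntitoneOn (fun r => √(1 - r ^ 2) / (r * c)) (Ioi 0) := fun x hx y _ hxy =>
  div_le_div₀ (sqrt_nonneg _) (sqrt_le_sqrt (by nlinarith [hx.out])) (mul_pos hx hc) (by gcongr)

theorem cos_pi_mul_pos {α : ℝ} (hα₁ : -(1 / 2) < α) (hα₂ : α < 1 / 2) : 0 < cos (π * α) :=
  cos_pos_of_mem_Ioo ⟨by nlinarith [pi_pos], by nlinarith [pi_pos]⟩

theorem sin_pi_mul_pos {α : ℝ} (hα0 : 0 < α) (hα : α < 1) : 0 < sin (π * α) :=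
  sin_pos_of_pos_of_lt_pi (by positivity) (by nlinarith [pi_pos])

theorem wedgeArea_zero {α : ℝ} (hα₁ : -(1 / 2) < α) (hα₂ : α < 1 / 2) : wedgeArea α 0 = α := by
  have h : arctan (tan (π * α)) = π * α :=
    arctan_tan (by nlinarith [pi_pos]) (by nlinarith [pi_pos])
  simp only [wedgeArea, zero_pow two_ne_zero, sub_zero, sqrt_one, mul_one, h, mul_zero, zero_mul]
  field_simp
  ring

theorem convexOn_wedgeArea {α : ℝ} (hα0 : 0 < α) (hα : α < 1 / 2) :
    ConvexOn ℝ (Ioo 0 1) (wedgeArea α) := by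
  have hc := cos_pi_mul_pos (by linarith) hα
  have hderiv : ∀ r ∈ Ioo (0 : ℝ) 1, HasDerivAt (wedgeArea α)
      (-(sin (π * α) / π) * arctan (√(1 - r ^ 2) / (r * cos (π * α)))) r :=
    fun r hr => hasDerivAt_wedgeArea hc.ne' hr.1.ne' (by nlinarith [hr.1, hr.2])
  refine MonotoneOn.convexOn_of_deriv (convex_Ioo 0 1) (continuous_wedgeArea α).continuousOn
    ?_ ?_ <;> rw [isOpen_Ioo.interior_eq]
  · exact fun r hr => (hderiv r hr).differentiableAt.differentiableWithinAt
  · intro x hx y hy hxy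
    rw [(hderiv x hx).deriv, (hderiv y hy).deriv]
    refine mul_le_mul_of_nonpos_left (arctan_le_arctan_iff.2 ?_)
      (neg_nonpos.2 (div_nonneg (sin_pi_mul_pos hα0 (by linarith)).le pi_pos.le))
    exact antitoneOn_sqrt_one_sub_sq_div hc hx.1 hy.1 hxy

/-- `a(0) + r a'(0) + r² a''(0) / 2`. -/
noncomputable def wedgeAreaTaylor (α r : ℝ) : ℝ :=
  α - r / 2 * sin (π * α) + r ^ 2 / (4 * π) * sin (2 * π * α)

theorem hasDerivAt_wedgeAreaTaylor (α r : ℝ) :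
    HasDerivAt (wedgeAreaTaylor α) (sin (π * α) / π * (r * cos (π * α) - π / 2)) r := by
  refine (((((hasDerivAt_id' r).div_const 2).mul_const (sin (π * α))).const_sub α).fun_add
    (((hasDerivAt_pow 2 r).div_const (4 * π)).mul_const (sin (2 * π * α)))).congr_deriv ?_
  rw [show 2 * π * α = 2 * (π * α) by ring, sin_two_mul]
  field_simp
  ring

theorem wedgeAreaTaylor_le {α r : ℝ} (hα0 : 0 < α) (hα : α < 1 / 2) (hr0 : 0 ≤ r)
    (hr1 : r ≤ 1) : wedgeAreaTaylor α r ≤ wedgeArea α r := by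
  have hc := cos_pi_mul_pos (by linarith) hα
  have hderiv : ∀ x ∈ Ioo (0 : ℝ) 1, HasDerivAt (fun r => wedgeArea α r - wedgeAreaTaylor α r)
      (sin (π * α) / π *
        (π / 2 - x * cos (π * α) - arctan (√(1 - x ^ 2) / (x * cos (π * α))))) x :=
    fun x hx => ((hasDerivAt_wedgeArea hc.ne' hx.1.ne' (by nlinarith [hx.1, hx.2])).sub
      (hasDerivAt_wedgeAreaTaylor α x)).congr_deriv (by ring)
  have hmono : MonotoneOn (fun r => wedgeArea α r - wedgeAreaTaylor α r) (Icc 0 1) := by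
    refine monotoneOn_of_deriv_nonneg (convex_Icc 0 1)
      ((continuous_wedgeArea α).sub (by unfold wedgeAreaTaylor; fun_prop)).continuousOn
      ?_ ?_ <;> rw [interior_Icc]
    · exact fun x hx => (hderiv x hx).differentiableAt.differentiableWithinAt
    · intro x hx
      rw [(hderiv x hx).deriv]
      exact mul_nonneg (div_nonneg (sin_pi_mul_pos hα0 (by linarith)).le pi_pos.le)
        (by linarith [arctan_sqrt_one_sub_sq_div_le hc (cos_le_one _) hx.1 hx.2])
  have h := hmono ⟨le_rfl, zero_le_one⟩ ⟨hr0, hr1⟩ hr0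
  simpa [wedgeArea_zero (by linarith) hα, wedgeAreaTaylor] using h

/-- Lower bound on the fractional spherical area of a wedge: for `0 < α < 1/2`, let
`θ(r) = 2·arctan(tan(πα)·√(1−r²))`, `β(r) = 2r·sin(πα)·arctan(√(1−r²)/(r·cos(πα)))`, and
`a(r) = (2θ(r) − 2β(r))/(4π)`.  Then for `0 ≤ r ≤ 1`,
`a(r) ≥ α − (r/2)·sin(πα) + (r²/(4π))·sin(2πα)` (the right side being
`a(0) + r·a'(0) + (r²/2)·a''(0)`, valid since `a` is convex). -/
theorem stmt6 (α : ℝ) (hα0 : 0 < α) (hα : α < 1 / 2)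
    (θ β a : ℝ → ℝ)
    (hθ : ∀ r, θ r = 2 * arctan (tan (π * α) * Real.sqrt (1 - r ^ 2)))
    (hβ : ∀ r, β r = 2 * r * sin (π * α) *
      arctan (Real.sqrt (1 - r ^ 2) / (r * cos (π * α))))
    (ha : ∀ r, a r = (2 * θ r - 2 * β r) / (4 * π)) :
    (ConvexOn ℝ (Set.Ioo (0 : ℝ) 1) a) ∧
    ∀ r : ℝ, 0 ≤ r → r ≤ 1 →
      a r ≥ α - r / 2 * sin (π * α) + r ^ 2 / (4 * π) * sin (2 * π * α) := by
  obtain rfl : a = wedgeArea α := funext fun r => by rw [ha, hθ, hβ, wedgeArea]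
  exact ⟨convexOn_wedgeArea hα0 hα, fun r hr0 hr1 => wedgeAreaTaylor_le hα0 hα hr0 hr1⟩
end

section
/- In the plane, among all angular sectors with fixed opening angle 2πα (0 < α ≤ 1/2) and fixed vertex V at distance r < 1 from the center of the unit circle, the arc length cut from the unit circle is minimized by the sector whose interior does not contain the center and whose bisector ray points away through the center. -/
open MeasureTheory Real Metric

/-!
Parametrize the circle by `t ↦ e^{i(γ+t)}` where `V = r e^{iγ}`, and let `F t` (`vertexAngle r t`)
be a continuous determination of the direction of `e^{i(γ+t)} - V`, measured from `γ`. `F` is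
increasing with `F (t + 2π) = F t + 2π`, so a sector of half-opening `β` cuts out an arc `[A, B]`
with `F B - F A = 2β`, and the symmetric sector cuts out `[-c, c]` with `F c = β`. Since
`F' t = (1 - r cos t) / (1 - 2 r cos t + r²)` increases with `cos t`, the increment of `F` over an
interval of length `2c` is largest for `[-c, c]`; hence `B - A ≥ 2c`, i.e. some rotation of the
plane maps the symmetric arc into any other one, and rotations preserve arc length.
-/

open scoped Pointwise

namespace LinearIsometryEquiv

variable {E : Type*} [NormedAddCommGroup E] [NormedSpace ℝ E]

def sphereMap (R : E ≃ₗᵢ[ℝ] E) (p : sphere (0 : E) 1) : sphere (0 : E) 1 :=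
  ⟨R p, by simp⟩

lemma continuous_sphereMap (R : E ≃ₗᵢ[ℝ] E) : Continuous R.sphereMap :=
  (R.continuous.comp continuous_subtype_val).subtype_mk _

lemma image_coe_preimage_sphereMap (R : E ≃ₗᵢ[ℝ] E) (B : Set (sphere (0 : E) 1)) :
    (↑) '' (R.sphereMap ⁻¹' B) = R ⁻¹' ((↑) '' B) := by
  ext x
  constructor
  · rintro ⟨p, hp, rfl⟩
    exact ⟨_, hp, rfl⟩
  · rintro ⟨q, hq, hqx⟩
    refine ⟨⟨x, by rw [mem_sphere_zero_iff_norm, ← R.norm_map, ← hqx]; simp⟩, ?_, rfl⟩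
    simpa [sphereMap, ← hqx] using hq

lemma measurePreserving_sphereMap [MeasurableSpace E] [BorelSpace E] {μ : Measure E}
    (R : E ≃ₗᵢ[ℝ] E) (hR : MeasurePreserving R μ μ) :
    MeasurePreserving R.sphereMap μ.toSphere μ.toSphere := by
  refine ⟨R.continuous_sphereMap.measurable, Measure.ext fun B hB => ?_⟩
  rw [Measure.map_apply R.continuous_sphereMap.measurable hB,
    Measure.toSphere_apply' _ (R.continuous_sphereMap.measurable hB), Measure.toSphere_apply' _ hB,
    image_coe_preimage_sphereMap]
  have hsmul : Set.Ioo (0 : ℝ) 1 • (R ⁻¹' ((↑) '' B)) = R ⁻¹' (Set.Ioo (0 : ℝ) 1 • (↑) '' B) := by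
    rw [← R.symm_symm, ← image_eq_preimage_symm, ← image_eq_preimage_symm,
      ← Set.image2_smul, ← Set.image2_smul, Set.image2_image_right, Set.image_image2]
    simp only [map_smul]
  rw [hsmul, hR.measure_preimage_emb R.toHomeomorph.measurableEmbedding]

end LinearIsometryEquiv

theorem Function.Even.le_apply_zero_of_antitoneOn {f : ℝ → ℝ} {T : ℝ} (hT : 0 < T)
    (heven : f.Even) (hper : f.Periodic T) (hanti : AntitoneOn f (Set.Icc 0 (T / 2)))
    (x : ℝ) : f x ≤ f 0 := by
  obtain ⟨y, ⟨hy₁, hy₂⟩, hxy⟩ := hper.exists_mem_Ico hT x (-(T / 2))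
  have habs : f |y| = f y := by
    rcases abs_choice y with h | h <;> rw [h]
    exact heven y
  rw [hxy, ← habs]
  exact hanti ⟨le_rfl, by positivity⟩ ⟨abs_nonneg y, abs_le.2 ⟨hy₁, by linarith⟩⟩ (abs_nonneg y)

theorem Real.cos_le_cos_iff_exists_abs_add_le {β φ : ℝ} (hβ₀ : 0 ≤ β) (hβ : β ≤ π) :
    cos β ≤ cos φ ↔ ∃ k : ℤ, |φ + k * (2 * π)| ≤ β := by
  constructor
  · intro h
    obtain ⟨k, hk, -⟩ := existsUnique_add_zsmul_mem_Ico two_pi_pos φ (-π)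
    rw [zsmul_eq_mul] at hk
    refine ⟨k, (strictAntiOn_cos.le_iff_ge ⟨hβ₀, hβ⟩
      ⟨abs_nonneg _, abs_le.2 ⟨hk.1, by linarith [hk.2]⟩⟩).1 ?_⟩
    rwa [cos_abs, cos_add_int_mul_two_pi]
  · rintro ⟨k, hk⟩
    rw [← cos_add_int_mul_two_pi φ k, ← cos_abs (φ + _)]
    exact cos_le_cos_of_nonneg_of_le_pi (abs_nonneg _) hβ hk

namespace SectorArc

variable {r : ℝ}

/-- A continuous determination of `arg (e^{it} - r)`; continuous because the denominator
`1 - r cos t` stays positive for `|r| < 1`. -/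
noncomputable def vertexAngle (r t : ℝ) : ℝ := t + arctan (r * sin t / (1 - r * cos t))

lemma one_sub_mul_cos_pos (hr : |r| < 1) (t : ℝ) : 0 < 1 - r * cos t := by
  have := (abs_mul r (cos t)).symm ▸ mul_le_of_le_one_right (abs_nonneg r) (abs_cos_le_one t)
  linarith [le_abs_self (r * cos t)]

lemma one_sub_two_mul_cos_add_sq_pos (hr : |r| < 1) (t : ℝ) : 0 < 1 - 2 * r * cos t + r ^ 2 := by
  nlinarith [one_sub_mul_cos_pos hr t, sq_nonneg (r * sin t), sin_sq_add_cos_sq t]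

lemma one_add_div_sq (hr : |r| < 1) (t : ℝ) :
    1 + (r * sin t / (1 - r * cos t)) ^ 2 = (1 - 2 * r * cos t + r ^ 2) / (1 - r * cos t) ^ 2 := by
  have := one_sub_mul_cos_pos hr t
  field_simp
  linear_combination r ^ 2 * sin_sq_add_cos_sq t

lemma sqrt_mul_cos_vertexAngle (hr : |r| < 1) (t : ℝ) :
    √(1 - 2 * r * cos t + r ^ 2) * cos (vertexAngle r t) = cos t - r := by
  have hd := one_sub_mul_cos_pos hr t
  rw [vertexAngle, cos_add, cos_arctan, sin_arctan, one_add_div_sq hr, sqrt_div' _ (sq_nonneg _),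
    sqrt_sq hd.le]
  have := sqrt_pos.2 (one_sub_two_mul_cos_add_sq_pos hr t)
  field_simp
  linear_combination -r * sin_sq_add_cos_sq t

lemma sqrt_mul_sin_vertexAngle (hr : |r| < 1) (t : ℝ) :
    √(1 - 2 * r * cos t + r ^ 2) * sin (vertexAngle r t) = sin t := by
  have hd := one_sub_mul_cos_pos hr t
  rw [vertexAngle, sin_add, cos_arctan, sin_arctan, one_add_div_sq hr, sqrt_div' _ (sq_nonneg _),
    sqrt_sq hd.le]
  have := sqrt_pos.2 (one_sub_two_mul_cos_add_sq_pos hr t)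
  field_simp
  ring

lemma hasDerivAt_vertexAngle (hr : |r| < 1) (t : ℝ) :
    HasDerivAt (vertexAngle r) ((1 - r * cos t) / (1 - 2 * r * cos t + r ^ 2)) t := by
  have hd := one_sub_mul_cos_pos hr t
  have hq := ((hasDerivAt_sin t).const_mul r).div
    (((hasDerivAt_cos t).const_mul r).const_sub 1) hd.ne'
  refine ((hasDerivAt_id t).add ((hasDerivAt_arctan _).comp t hq)).congr_deriv ?_
  simp only [Pi.div_apply]
  rw [one_add_div_sq hr]
  have := one_sub_two_mul_cos_add_sq_pos hr t
  field_simp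
  linear_combination -(r ^ 2) * sin_sq_add_cos_sq t

lemma continuous_vertexAngle (hr : |r| < 1) : Continuous (vertexAngle r) :=
  continuous_iff_continuousAt.2 fun t => (hasDerivAt_vertexAngle hr t).continuousAt

lemma strictMono_vertexAngle (hr : |r| < 1) : StrictMono (vertexAngle r) :=
  strictMono_of_hasDerivAt_pos (hasDerivAt_vertexAngle hr)
    fun t => div_pos (one_sub_mul_cos_pos hr t) (one_sub_two_mul_cos_add_sq_pos hr t)

lemma vertexAngle_neg (r t : ℝ) : vertexAngle r (-t) = -vertexAngle r t := by
  simp only [vertexAngle, sin_neg, cos_neg, mul_neg, neg_div, arctan_neg]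
  ring

lemma vertexAngle_zero (r : ℝ) : vertexAngle r 0 = 0 := by simp [vertexAngle]

lemma vertexAngle_pi (r : ℝ) : vertexAngle r π = π := by simp [vertexAngle]

lemma vertexAngle_add_int_mul_two_pi (r t : ℝ) (k : ℤ) :
    vertexAngle r (t + k * (2 * π)) = vertexAngle r t + k * (2 * π) := by
  simp only [vertexAngle, sin_add_int_mul_two_pi, cos_add_int_mul_two_pi]
  ring

lemma surjective_vertexAngle (hr : |r| < 1) : Function.Surjective (vertexAngle r) := by
  have hlo (t : ℝ) : t - π / 2 ≤ vertexAngle r t := by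
    unfold vertexAngle; linarith [neg_pi_div_two_lt_arctan (r * sin t / (1 - r * cos t))]
  have hhi (t : ℝ) : vertexAngle r t ≤ t + π / 2 := by
    unfold vertexAngle; linarith [arctan_lt_pi_div_two (r * sin t / (1 - r * cos t))]
  exact (continuous_vertexAngle hr).surjective
    (Filter.tendsto_atTop_mono hlo (Filter.tendsto_atTop_add_const_right _ _ Filter.tendsto_id))
    (Filter.tendsto_atBot_mono hhi (Filter.tendsto_atBot_add_const_right _ _ Filter.tendsto_id))

lemma deriv_vertexAngle_le_of_cos_le (h0 : 0 ≤ r) (h1 : r < 1) {a b : ℝ} (hab : cos a ≤ cos b) :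
    (1 - r * cos a) / (1 - 2 * r * cos a + r ^ 2)
      ≤ (1 - r * cos b) / (1 - 2 * r * cos b + r ^ 2) := by
  have hr : |r| < 1 := abs_lt.2 ⟨by linarith, h1⟩
  rw [div_le_div_iff₀ (one_sub_two_mul_cos_add_sq_pos hr a) (one_sub_two_mul_cos_add_sq_pos hr b)]
  nlinarith [mul_nonneg (mul_nonneg h0 (sub_nonneg.2 hab)) (by nlinarith : (0 : ℝ) ≤ 1 - r ^ 2)]

lemma vertexAngle_add_two_mul_sub_le (h0 : 0 ≤ r) (h1 : r < 1) {c : ℝ} (hc₀ : 0 ≤ c)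
    (hcπ : c ≤ π) (x : ℝ) :
    vertexAngle r (x + 2 * c) - vertexAngle r x ≤ vertexAngle r c - vertexAngle r (-c) := by
  have hr : |r| < 1 := abs_lt.2 ⟨by linarith, h1⟩
  set K : ℝ → ℝ := fun y => vertexAngle r (y + c) - vertexAngle r (y - c) with hK
  have hK' (y : ℝ) : HasDerivAt K
      ((1 - r * cos (y + c)) / (1 - 2 * r * cos (y + c) + r ^ 2)
        - (1 - r * cos (y - c)) / (1 - 2 * r * cos (y - c) + r ^ 2)) y :=
    ((hasDerivAt_vertexAngle hr (y + c)).comp_add_const y c).sub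
      ((hasDerivAt_vertexAngle hr (y - c)).comp_sub_const y c)
  have hanti : AntitoneOn K (Set.Icc 0 (2 * π / 2)) := by
    rw [mul_div_cancel_left₀ _ two_ne_zero]
    refine antitoneOn_of_hasDerivWithinAt_nonpos (convex_Icc 0 π)
      (fun y _ => (hK' y).continuousAt.continuousWithinAt)
      (fun y _ => (hK' y).hasDerivWithinAt) fun y hy => ?_
    rw [interior_Icc] at hy
    have hcos : cos (y + c) ≤ cos (y - c) := by
      nlinarith [cos_add y c, cos_sub y c, sin_nonneg_of_nonneg_of_le_pi hy.1.le hy.2.le,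
        sin_nonneg_of_nonneg_of_le_pi hc₀ hcπ]
    linarith [deriv_vertexAngle_le_of_cos_le h0 h1 hcos]
  have heven : K.Even := fun y => by
    simp only [hK, show -y + c = -(y - c) by ring, show -y - c = -(y + c) by ring,
      vertexAngle_neg]
    ring
  have hper : K.Periodic (2 * π) := fun y => by
    have := vertexAngle_add_int_mul_two_pi r
    simp only [hK, show y + 2 * π + c = y + c + (1 : ℤ) * (2 * π) by push_cast; ring,
      show y + 2 * π - c = y - c + (1 : ℤ) * (2 * π) by push_cast; ring, this]
    ring
  simpa [hK, add_assoc, two_mul] using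
    heven.le_apply_zero_of_antitoneOn two_pi_pos hper hanti (x + c)

/-- The parameters `t` for which `e^{i(γ+t)}` lies in the closed sector with vertex `r e^{iγ}`,
axis direction `γ + ψ` and half-opening `β` (this does not depend on `γ`). -/
def sectorParams (r β ψ : ℝ) : Set ℝ := {t | cos β ≤ cos (vertexAngle r t - ψ)}

lemma exists_add_mem_sectorParams (h0 : 0 ≤ r) (h1 : r < 1) {β : ℝ} (hβ₀ : 0 ≤ β) (hβ : β ≤ π)
    (ψ : ℝ) : ∃ δ, ∀ t ∈ sectorParams r β 0, t + δ ∈ sectorParams r β ψ := by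
  have hr : |r| < 1 := abs_lt.2 ⟨by linarith, h1⟩
  have hmono := strictMono_vertexAngle hr
  obtain ⟨c, hc⟩ := surjective_vertexAngle hr β
  obtain ⟨A, hA⟩ := surjective_vertexAngle hr (ψ - β)
  have hc₀ : 0 ≤ c := hmono.le_iff_le.1 (by rwa [vertexAngle_zero, hc])
  have hcπ : c ≤ π := hmono.le_iff_le.1 (by rwa [vertexAngle_pi, hc])
  have hAc : vertexAngle r (A + 2 * c) ≤ ψ + β := by
    have := vertexAngle_add_two_mul_sub_le h0 h1 hc₀ hcπ A
    rw [vertexAngle_neg, hc, hA] at this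
    linarith
  refine ⟨A + c, fun t ht => ?_⟩
  obtain ⟨k, hk⟩ := (cos_le_cos_iff_exists_abs_add_le hβ₀ hβ).1 (by simpa [sectorParams] using ht)
  rw [← vertexAngle_add_int_mul_two_pi, abs_le] at hk
  have hs₁ : -c ≤ t + k * (2 * π) := hmono.le_iff_le.1 (by rw [vertexAngle_neg, hc]; linarith)
  have hs₂ : t + k * (2 * π) ≤ c := hmono.le_iff_le.1 (by rw [hc]; linarith)
  have hlo := hmono.monotone (show A ≤ t + k * (2 * π) + (A + c) by linarith)
  have hhi := hmono.monotone (show t + k * (2 * π) + (A + c) ≤ A + 2 * c by linarith)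
  rw [show t + k * (2 * π) + (A + c) = t + (A + c) + k * (2 * π) by ring,
    vertexAngle_add_int_mul_two_pi] at hlo hhi
  refine (cos_le_cos_iff_exists_abs_add_le hβ₀ hβ).2 ⟨k, abs_le.2 ⟨?_, ?_⟩⟩ <;> linarith

local notation "ℝ²" => EuclideanSpace ℝ (Fin 2)

noncomputable def circlePt (θ : ℝ) : ℝ² := !₂[cos θ, sin θ]

lemma inner_circlePt (a b : ℝ) : inner ℝ (circlePt a) (circlePt b) = cos (a - b) := by
  simp only [circlePt, PiLp.inner_apply, RCLike.inner_apply, ringHom_apply, Fin.sum_univ_two,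
    Fin.isValue, Matrix.cons_val_zero, Matrix.cons_val_one, Matrix.cons_val_fin_one, cos_sub]
  ring

lemma norm_circlePt (θ : ℝ) : ‖circlePt θ‖ = 1 := by
  simp [EuclideanSpace.norm_eq, circlePt, Fin.sum_univ_two]

lemma orthonormalBasisOneI_repr_circleExp (θ : ℝ) :
    Complex.orthonormalBasisOneI.repr (Circle.exp θ) = circlePt θ := by
  ext i
  fin_cases i <;>
    simp [circlePt, Circle.coe_exp, Complex.exp_ofReal_mul_I_re, Complex.exp_ofReal_mul_I_im]

lemma exists_eq_circlePt {x : ℝ²} (hx : ‖x‖ = 1) : ∃ θ, x = circlePt θ := by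
  obtain ⟨θ, hθ⟩ := (Complex.norm_eq_one_iff _).1
    (by rwa [LinearIsometryEquiv.norm_map] : ‖Complex.orthonormalBasisOneI.repr.symm x‖ = 1)
  refine ⟨θ, ?_⟩
  rw [← orthonormalBasisOneI_repr_circleExp, Circle.coe_exp, hθ,
    LinearIsometryEquiv.apply_symm_apply]

lemma angle_circlePt_le_iff {a b β : ℝ} (hβ₀ : 0 ≤ β) (hβ : β ≤ π) :
    InnerProductGeometry.angle (circlePt a) (circlePt b) ≤ β ↔ cos β ≤ cos (a - b) := by
  rw [← strictAntiOn_cos.le_iff_ge ⟨hβ₀, hβ⟩ ⟨InnerProductGeometry.angle_nonneg _ _,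
    InnerProductGeometry.angle_le_pi _ _⟩, InnerProductGeometry.cos_angle, inner_circlePt,
    norm_circlePt, norm_circlePt, mul_one, div_one]

lemma circlePt_add_sub_smul (hr : |r| < 1) (γ t : ℝ) :
    circlePt (γ + t) - r • circlePt γ
      = √(1 - 2 * r * cos t + r ^ 2) • circlePt (γ + vertexAngle r t) := by
  have hc := sqrt_mul_cos_vertexAngle hr t
  have hs := sqrt_mul_sin_vertexAngle hr t
  ext i
  fin_cases i <;> simp only [circlePt, cos_add, sin_add, Fin.zero_eta, Fin.mk_one, Fin.isValue,
    PiLp.sub_apply, PiLp.smul_apply, smul_eq_mul, Matrix.cons_val_zero, Matrix.cons_val_one,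
    Matrix.cons_val_fin_one]
  · linear_combination (-cos γ) * hc + sin γ * hs
  · linear_combination (-sin γ) * hc - cos γ * hs

lemma angle_circlePt_sub_smul_le_iff (hr : |r| < 1) {β : ℝ} (hβ₀ : 0 ≤ β) (hβ : β ≤ π)
    (γ t ψ : ℝ) :
    InnerProductGeometry.angle (circlePt (γ + t) - r • circlePt γ) (circlePt (γ + ψ)) ≤ β ↔
      t ∈ sectorParams r β ψ := by
  rw [circlePt_add_sub_smul hr, InnerProductGeometry.angle_smul_left_of_pos _ _
    (sqrt_pos.2 (one_sub_two_mul_cos_add_sq_pos hr t)), angle_circlePt_le_iff hβ₀ hβ,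
    add_sub_add_left_eq_sub]
  rfl

noncomputable def planeRotation (δ : ℝ) : ℝ² ≃ₗᵢ[ℝ] ℝ² :=
  Complex.orthonormalBasisOneI.repr.symm.trans
    ((rotation (Circle.exp δ)).trans Complex.orthonormalBasisOneI.repr)

lemma planeRotation_circlePt (δ θ : ℝ) : planeRotation δ (circlePt θ) = circlePt (θ + δ) := by
  rw [← orthonormalBasisOneI_repr_circleExp, ← orthonormalBasisOneI_repr_circleExp, planeRotation,
    Circle.exp_add, mul_comm]
  simp

end SectorArc

open SectorArc in
/-- Planar arc-length minimization: fix the unit circle centered at the origin `O` of `ℝ²`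
and a vertex `V ≠ O` with `‖V‖ = r < 1`.  For a unit direction `u`, the angular sector with
vertex `V`, axis `u` and opening angle `2πα` (`0 < α ≤ 1/2`) is
`S u = {x | angle (x − V) u ≤ πα}`.  Among all such sectors, the arc length cut from the
unit circle (measured by the surface measure `volume.toSphere`) is minimized by the sector
whose bisector points away from the center, i.e. `u = V/‖V‖` (so its interior does not
contain `O`). -/
theorem stmt7 (V : EuclideanSpace ℝ (Fin 2)) (r α : ℝ)
    (hV : V ≠ 0) (hVr : ‖V‖ = r) (hr : r < 1)
    (hα0 : 0 < α) (hα : α ≤ 1 / 2)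
    (S : EuclideanSpace ℝ (Fin 2) → Set (EuclideanSpace ℝ (Fin 2)))
    (hS : ∀ u, S u = {x | InnerProductGeometry.angle (x - V) u ≤ π * α}) :
    ∀ u : EuclideanSpace ℝ (Fin 2), ‖u‖ = 1 →
      (volume : Measure (EuclideanSpace ℝ (Fin 2))).toSphere
          {p : sphere (0 : EuclideanSpace ℝ (Fin 2)) 1 |
            (p : EuclideanSpace ℝ (Fin 2)) ∈ S (‖V‖⁻¹ • V)} ≤
        (volume : Measure (EuclideanSpace ℝ (Fin 2))).toSphere
          {p : sphere (0 : EuclideanSpace ℝ (Fin 2)) 1 |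
            (p : EuclideanSpace ℝ (Fin 2)) ∈ S u} := by
  intro u hu
  have h0 : 0 ≤ r := hVr ▸ norm_nonneg V
  have hr' : |r| < 1 := abs_lt.2 ⟨by linarith, hr⟩
  have hV' : ‖V‖ ≠ 0 := norm_ne_zero_iff.2 hV
  obtain ⟨γ, hγ⟩ : ∃ γ, ‖V‖⁻¹ • V = circlePt γ :=
    exists_eq_circlePt (by rw [norm_smul, norm_inv, norm_norm, inv_mul_cancel₀ hV'])
  have hVγ : V = r • circlePt γ := by rw [← hγ, ← hVr, smul_inv_smul₀ hV']
  have hβ₀ : 0 ≤ π * α := by positivity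
  have hβ : π * α ≤ π := by nlinarith [pi_pos]
  have hmem (ψ t : ℝ) :
      circlePt (γ + t) ∈ S (circlePt (γ + ψ)) ↔ t ∈ sectorParams r (π * α) ψ := by
    rw [hS, Set.mem_ofPred_eq, hVγ, angle_circlePt_sub_smul_le_iff hr' hβ₀ hβ]
  obtain ⟨θ, rfl⟩ := exists_eq_circlePt hu
  obtain ⟨δ, hδ⟩ := exists_add_mem_sectorParams h0 hr hβ₀ hβ (θ - γ)
  have hsub : {p : sphere (0 : EuclideanSpace ℝ (Fin 2)) 1 | ↑p ∈ S (circlePt γ)}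
      ⊆ (planeRotation δ).sphereMap ⁻¹' {p | ↑p ∈ S (circlePt θ)} := by
    intro p hp
    obtain ⟨τ, hτ⟩ := exists_eq_circlePt (norm_eq_of_mem_sphere p)
    have hτγ := (hmem 0 (τ - γ)).1 (by simpa [hτ] using hp)
    show planeRotation δ p ∈ S (circlePt θ)
    rw [hτ, planeRotation_circlePt, show τ + δ = γ + (τ - γ + δ) by ring,
      show θ = γ + (θ - γ) by ring, hmem]
    exact hδ _ hτγ
  rw [hγ]
  have hrot := (planeRotation δ).measurePreserving_sphereMap (planeRotation δ).measurePreserving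
  calc _ ≤ _ := measure_mono hsub
    _ ≤ _ := Measure.le_map_apply hrot.measurable.aemeasurable _
    _ = _ := by rw [hrot.map_eq]
end

section
/- Let α = arccos(1/3)/(2π). Then for all integer pairs (c,w) with 0 ≤ c, 1 ≤ w, c + w ≤ 5, we have αw + c/2 ≠ 1. -/
open Real

/-!
Since `cos (π / 3) = 1 / 2 > 1 / 3 > (√5 - 1) / 4 = cos (2π / 5)`, we get
`π / 3 < arccos (1 / 3) < 2π / 5`, i.e. `1 / 6 < α < 1 / 5`. Then `α w ∈ (w / 6, w / 5)`, and for
`c + w ≤ 5` no such interval contains `1 - c / 2`.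
-/

namespace Real

lemma lt_arccos_of_lt_cos {x θ : ℝ} (hθ₀ : 0 ≤ θ) (hθπ : θ ≤ π) (hx : -1 ≤ x) (h : x < cos θ) :
    θ < arccos x := by
  rw [← arccos_cos hθ₀ hθπ]
  exact strictAntiOn_arccos ⟨hx, h.le.trans (cos_le_one θ)⟩ ⟨neg_one_le_cos θ, cos_le_one θ⟩ h

lemma arccos_lt_of_cos_lt {x θ : ℝ} (hθ₀ : 0 ≤ θ) (hθπ : θ ≤ π) (hx : x ≤ 1) (h : cos θ < x) :
    arccos x < θ := by
  rw [← arccos_cos hθ₀ hθπ]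
  exact strictAntiOn_arccos ⟨neg_one_le_cos θ, cos_le_one θ⟩ ⟨(neg_one_le_cos θ).trans h.le, hx⟩ h

lemma cos_two_pi_div_five : cos (2 * π / 5) = (√5 - 1) / 4 := by
  have hsqrt : √5 ^ 2 = 5 := sq_sqrt (by norm_num)
  rw [show 2 * π / 5 = 2 * (π / 5) by ring, cos_two_mul, cos_pi_div_five]
  linear_combination hsqrt / 8

lemma arccos_one_third_mem_Ioo : arccos (1 / 3) ∈ Set.Ioo (π / 3) (2 * π / 5) := by
  have hπ := pi_pos
  constructor
  · refine lt_arccos_of_lt_cos (by positivity) (by linarith) (by norm_num) ?_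
    rw [cos_pi_div_three]
    norm_num
  · refine arccos_lt_of_cos_lt (by positivity) (by linarith) (by norm_num) ?_
    rw [cos_two_pi_div_five]
    nlinarith [sq_sqrt (show (0 : ℝ) ≤ 5 by norm_num), sqrt_nonneg 5]

lemma arccos_one_third_div_two_pi_mem_Ioo : arccos (1 / 3) / (2 * π) ∈ Set.Ioo (1 / 6) (1 / 5) := by
  obtain ⟨hlo, hhi⟩ := arccos_one_third_mem_Ioo
  have h2π : 0 < 2 * π := by positivity
  constructor
  · rw [lt_div_iff₀ h2π]; linarith
  · rw [div_lt_iff₀ h2π]; linarith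

end Real

/-- With `α = arccos(1/3)/(2π)`: for all integers `c ≥ 0`, `w ≥ 1` with `c + w ≤ 5`,
we have `αw + c/2 ≠ 1`. -/
theorem stmt9 (α : ℝ) (hα : α = arccos (1 / 3) / (2 * π)) :
    ∀ c w : ℕ, 1 ≤ w → c + w ≤ 5 → α * w + c / 2 ≠ 1 := by
  intro c w hw hcw heq
  obtain ⟨hlo, hhi⟩ := hα ▸ arccos_one_third_div_two_pi_mem_Ioo
  have hw' : (0 : ℝ) < w := by exact_mod_cast hw
  have hlower : 1 / 6 * (w : ℝ) < α * w := mul_lt_mul_of_pos_right hlo hw'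
  have hupper : α * w < 1 / 5 * (w : ℝ) := mul_lt_mul_of_pos_right hhi hw'
  have hlower' : w + 3 * c < 6 := by
    suffices (w : ℝ) + 3 * c < 6 by exact_mod_cast this
    linarith
  have hupper' : 10 < 2 * w + 5 * c := by
    suffices (10 : ℝ) < 2 * w + 5 * c by exact_mod_cast this
    linarith
  omega
end

section
/- arccos(1/3) is not a rational multiple of π. -/
open Real

/-- `arccos(1/3)` (the dihedral angle of the regular tetrahedron) is not a rational
multiple of `π`. -/
theorem stmt10 : ¬ ∃ q : ℚ, arccos (1 / 3) = (q : ℝ) * π := by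
  intro hrat
  have hcos : cos (arccos (1 / 3)) = 1 / 3 := cos_arccos (by norm_num) (by norm_num)
  have hniven := niven hrat ⟨1 / 3, by rw [hcos]; norm_num⟩
  rw [hcos] at hniven
  norm_num at hniven
end

section
/- Let α = arccos(1/3)/(2π) and γ = 0.304. Then 8α + 7·(−γ/(2√3) + √2·γ²/(6π)) > 1. -/
open Real

/-! The only non-algebraic quantities are `π`, `√2`, `√3` and `arccos (1/3)`. The last is
`π/2 - arcsin (1/3)`, and `arcsin (1/3) ≤ 0.3409` because `sin x ≥ x - x³/6 ≥ 1/3` at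
`x = 0.3409`. With `π` pinned down to six decimals, the three terms are then at least
`1.56595`, `-7 · 0.08776` and `7 · 0.006933`, whose sum exceeds `1`. -/

theorem Real.arcsin_le_of_le_sub_cube {x y : ℝ} (hx₀ : 0 ≤ x) (hx : x ≤ π / 2) (hy : -1 ≤ y)
    (hyx : y ≤ x - x ^ 3 / 6) : arcsin y ≤ x := by
  have hy_sin : y ≤ sin x := hyx.trans (sin_ge_sub_cube hx₀)
  rw [arcsin_le_iff_le_sin ⟨hy, hy_sin.trans (sin_le_one x)⟩ ⟨by linarith [pi_pos], hx⟩]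
  exact hy_sin

theorem Real.pi_div_two_sub_le_arccos_of_le_sub_cube {x y : ℝ} (hx₀ : 0 ≤ x) (hx : x ≤ π / 2)
    (hy : -1 ≤ y) (hyx : y ≤ x - x ^ 3 / 6) : π / 2 - x ≤ arccos y := by
  rw [arccos_eq_pi_div_two_sub_arcsin]
  linarith [arcsin_le_of_le_sub_cube hx₀ hx hy hyx]

/-- Numeric inequality underlying "at most seven wedges": with `α = arccos(1/3)/(2π)` and
`γ = 0.304`, we have `8α + 7·(−γ/(2√3) + √2·γ²/(6π)) > 1`. -/
theorem stmt13 (α γ : ℝ) (hα : α = arccos (1 / 3) / (2 * π)) (hγ : γ = 0.304) :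
    8 * α + 7 * (-(γ / (2 * Real.sqrt 3)) + Real.sqrt 2 * γ ^ 2 / (6 * π)) > 1 := by
  subst hα hγ
  have hπ_lo := pi_gt_d6
  have hπ_hi := pi_lt_d6
  have hsqrt2 : (1.4142 : ℝ) ≤ √2 := (le_sqrt (by norm_num) (by norm_num)).2 (by norm_num)
  have hsqrt3 : (1.732 : ℝ) ≤ √3 := (le_sqrt (by norm_num) (by norm_num)).2 (by norm_num)
  have harccos : π / 2 - 0.3409 ≤ arccos (1 / 3) :=
    pi_div_two_sub_le_arccos_of_le_sub_cube (by norm_num) (by linarith) (by norm_num)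
      (by norm_num)
  have hwedges : (1.56595 : ℝ) ≤ 8 * (arccos (1 / 3) / (2 * π)) := by
    rw [mul_div_assoc', le_div_iff₀ (by positivity)]
    nlinarith
  have hlinear : (0.304 : ℝ) / (2 * √3) ≤ 0.08776 := by
    rw [div_le_iff₀ (by positivity)]
    linarith
  have hquadratic : (0.006933 : ℝ) ≤ √2 * 0.304 ^ 2 / (6 * π) := by
    rw [le_div_iff₀ (by positivity)]
    linarith
  linarith
end

section
/- Let B be the unit ball, W₀ a centered wedge of angle 2πα = arccos(1/3) (edge through the center), and W any other wedge or cap in B (intersection of B with at most two half-spaces) with interior disjoint from W₀ and not containing the center. Then vol(W₀ ∪ W)/vol(B) ≤ α + 1/2, with equality achievable, so the minimum missing volume fraction for a centered wedge plus one more wedge is exactly 1/2 − α. -/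
/-!
If the centre is not interior to `W`, then it is not interior to one of the two half-spaces
cutting out `W`, so `W` lies in a closed half-ball and `vol W ≤ vol B / 2`. Together with
`vol W₀ = α · vol B` this is the bound, and it is attained by the half-ball on the far side of a
face of `W₀`, which meets `W₀` in a null set. The volume of `W₀` is computed by slicing along
its edge: the slice at height `z` is a circular sector of radius `√(1 - z²)` and angle `2πα`,
whose area is computed in polar coordinates.
-/

open MeasureTheory Real Metric Set
open scoped RealInnerProductSpace ENNReal

section InnerHalfspace

variable {V : Type*} [NormedAddCommGroup V] [InnerProductSpace ℝ V]

lemma interior_setOf_inner_le [CompleteSpace V] {n : V} (hn : n ≠ 0) (c : ℝ) :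
    interior {x | ⟪n, x⟫ ≤ c} = {x | ⟪n, x⟫ < c} := by
  have hsurj : Function.Surjective (innerSL ℝ n) := by
    refine (LinearMap.surjective_or_eq_zero (innerSL ℝ n : V →ₗ[ℝ] ℝ)).resolve_right
      fun h ↦ hn ?_
    simpa using LinearMap.congr_fun h n
  have := (innerSL ℝ n).interior_preimage hsurj (Iic c)
  rwa [interior_Iic] at this

lemma exists_subset_setOf_inner_nonpos_of_zero_notMem_interior [CompleteSpace V] [Nontrivial V]
    {n : V} {c : ℝ} (h : 0 ∉ interior {x | ⟪n, x⟫ ≤ c}) :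
    ∃ m ≠ 0, {x | ⟪n, x⟫ ≤ c} ⊆ {x : V | ⟪m, x⟫ ≤ 0} := by
  rcases eq_or_ne n 0 with rfl | hn
  · have hc : c < 0 := by
      by_contra! hc
      simp [hc] at h
    obtain ⟨m, hm⟩ := exists_ne (0 : V)
    refine ⟨m, hm, fun x hx ↦ ?_⟩
    simp only [inner_zero_left, mem_ofPred_eq] at hx
    linarith
  · have hc : c ≤ 0 := by
      by_contra! hc
      simp [interior_setOf_inner_le hn, hc] at h
    exact ⟨n, hn, fun x hx ↦ le_trans hx hc⟩

lemma exists_subset_halfBall_of_zero_notMem_interior [CompleteSpace V] [Nontrivial V]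
    {n₁ n₂ : V} {c₁ c₂ r : ℝ} (hr : 0 < r)
    (h : 0 ∉ interior ({x | ⟪n₁, x⟫ ≤ c₁} ∩ {x | ⟪n₂, x⟫ ≤ c₂} ∩ closedBall 0 r)) :
    ∃ m ≠ 0, {x | ⟪n₁, x⟫ ≤ c₁} ∩ {x | ⟪n₂, x⟫ ≤ c₂} ∩ closedBall 0 r ⊆
      {x | ⟪m, x⟫ ≤ 0} ∩ closedBall 0 r := by
  rw [interior_inter, interior_inter, interior_closedBall _ hr.ne', mem_inter_iff,
    mem_inter_iff, not_and_or, not_and_or, or_assoc] at h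
  rcases h with h | h | h
  · obtain ⟨m, hm, hsub⟩ := exists_subset_setOf_inner_nonpos_of_zero_notMem_interior h
    exact ⟨m, hm, inter_subset_inter_left _ (inter_subset_left.trans hsub)⟩
  · obtain ⟨m, hm, hsub⟩ := exists_subset_setOf_inner_nonpos_of_zero_notMem_interior h
    exact ⟨m, hm, inter_subset_inter_left _ (inter_subset_right.trans hsub)⟩
  · exact absurd (mem_ball_self hr) h

lemma disjoint_interior_setOf_inner_nonpos_inter [CompleteSpace V] {e : V} (he : e ≠ 0)
    {S : Set V} (hS : S ⊆ {x | 0 ≤ ⟪e, x⟫}) (T : Set V) :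
    Disjoint (interior ({x | ⟪e, x⟫ ≤ 0} ∩ T)) S := by
  refine disjoint_left.2 fun x hx hxS ↦ ?_
  have := interior_mono inter_subset_left hx
  rw [interior_setOf_inner_le he, mem_ofPred_eq] at this
  exact this.not_ge (hS hxS)

variable [FiniteDimensional ℝ V] [MeasurableSpace V] [BorelSpace V] (μ : Measure V)
  [μ.IsAddHaarMeasure]

lemma addHaar_setOf_inner_eq_zero {n : V} (hn : n ≠ 0) : μ {x | ⟪n, x⟫ = 0} = 0 := by
  have hker : {x | ⟪n, x⟫ = 0} = ((ℝ ∙ n)ᗮ : Set V) := by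
    ext x
    simp [Submodule.mem_orthogonal_singleton_iff_inner_right]
  refine hker ▸ Measure.addHaar_submodule μ _ fun h ↦ hn ?_
  have : n ∈ (ℝ ∙ n)ᗮ := h ▸ Submodule.mem_top
  simpa [Submodule.mem_orthogonal_singleton_iff_inner_right] using this

lemma addHaar_setOf_inner_nonpos_inter_closedBall {n : V} (hn : n ≠ 0) (r : ℝ) :
    μ ({x | ⟪n, x⟫ ≤ 0} ∩ closedBall 0 r) = μ (closedBall 0 r) / 2 := by
  set H := {x | ⟪n, x⟫ ≤ 0} ∩ closedBall (0 : V) r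
  have hneg : -H = {x | 0 ≤ ⟪n, x⟫} ∩ closedBall 0 r := by
    ext x
    simp [H, inner_neg_right]
  have hunion : H ∪ -H = closedBall 0 r := by
    rw [hneg, ← union_inter_distrib_right, ← ofPred_or]
    simp [le_total]
  have hinter : μ (H ∩ -H) = 0 := by
    refine measure_mono_null (fun x hx ↦ ?_) (addHaar_setOf_inner_eq_zero μ hn)
    rw [hneg] at hx
    exact le_antisymm hx.1.1 hx.2.1
  have hmeas : MeasurableSet (-H) := by
    rw [hneg]
    exact (measurableSet_le measurable_const (by fun_prop)).inter measurableSet_closedBall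
  have hsum := measure_union_add_inter (μ := μ) H hmeas
  rw [hunion, hinter, add_zero, Measure.measure_neg] at hsum
  rw [ENNReal.eq_div_iff two_ne_zero ENNReal.ofNat_ne_top, two_mul, hsum]

lemma addHaar_union_setOf_inner_nonpos_inter {e : V} (he : e ≠ 0) {S T : Set V}
    (hS : S ⊆ {x | 0 ≤ ⟪e, x⟫}) (hT : MeasurableSet T) :
    μ (S ∪ ({x | ⟪e, x⟫ ≤ 0} ∩ T)) = μ S + μ ({x | ⟪e, x⟫ ≤ 0} ∩ T) := by
  refine measure_union₀
    ((measurableSet_le (by fun_prop) measurable_const).inter hT).nullMeasurableSet ?_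
  refine measure_mono_null (fun x hx ↦ ?_) (addHaar_setOf_inner_eq_zero μ he)
  exact le_antisymm hx.2.1 (hS hx.1)

end InnerHalfspace

lemma volume_polarCoord_symm_image {s : Set (ℝ × ℝ)} (hs : MeasurableSet s)
    (hst : s ⊆ polarCoord.target) :
    volume (polarCoord.symm '' s) = ∫⁻ p in s, ENNReal.ofReal p.1 := by
  rw [← setLIntegral_one, lintegral_image_eq_lintegral_abs_det_fderiv_mul volume hs
    (fun p _ ↦ (hasFDerivAt_polarCoord_symm p).hasFDerivWithinAt)
    (polarCoord.symm.injOn.mono hst)]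
  refine setLIntegral_congr_fun hs fun p hp ↦ ?_
  rw [det_fderivPolarCoordSymm, abs_of_pos (hst hp).1, mul_one]

lemma setLIntegral_Ioc_prod_ofReal_fst {R : ℝ} (hR : 0 ≤ R) (E : Set ℝ) :
    ∫⁻ p in Ioc 0 R ×ˢ E, ENNReal.ofReal p.1 = ENNReal.ofReal (R ^ 2 / 2) * volume E := by
  have hρ : ∫⁻ ρ in Ioc (0 : ℝ) R, ENNReal.ofReal ρ = ENNReal.ofReal (R ^ 2 / 2) := by
    rw [← ofReal_integral_eq_lintegral_ofReal
      (continuous_id'.integrableOn_Icc.mono_set Ioc_subset_Icc_self)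
      (ae_restrict_of_forall_mem measurableSet_Ioc fun ρ (hρ : ρ ∈ Ioc 0 R) ↦ hρ.1.le),
      ← intervalIntegral.integral_of_le hR, integral_id]
    norm_num
  rw [Measure.volume_eq_prod, ← Measure.prod_restrict, lintegral_prod _ (by fun_prop)]
  simp only [lintegral_const, Measure.restrict_apply_univ]
  rw [lintegral_mul_const _ (by fun_prop), hρ]

lemma volume_polarCoord_symm_image_Ioc_prod {R : ℝ} (hR : 0 ≤ R) {E : Set ℝ}
    (hE : MeasurableSet E) (hEπ : E ⊆ Ioo (-π) π) :
    volume (polarCoord.symm '' (Ioc 0 R ×ˢ E)) = ENNReal.ofReal (R ^ 2 / 2) * volume E := by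
  rw [volume_polarCoord_symm_image (measurableSet_Ioc.prod hE)
    (prod_mono (fun ρ hρ ↦ hρ.1) hEπ), setLIntegral_Ioc_prod_ofReal_fst hR]

def polarSector (E : Set ℝ) : Set (ℝ × ℝ) := polarCoord.symm '' (Ici 0 ×ˢ E)

lemma mem_polarSector {E : Set ℝ} {p : ℝ × ℝ} :
    p ∈ polarSector E ↔ ∃ ρ φ, 0 ≤ ρ ∧ φ ∈ E ∧ p.1 = ρ * cos φ ∧ p.2 = ρ * sin φ := by
  simp [polarSector, Prod.ext_iff, eq_comm, and_assoc]

lemma polarSector_subset_setOf_snd_nonneg {E : Set ℝ} (hE : E ⊆ Icc 0 π) :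
    polarSector E ⊆ {p | 0 ≤ p.2} := by
  rintro _ ⟨⟨ρ, φ⟩, ⟨hρ, hφ⟩, rfl⟩
  exact mul_nonneg hρ (sin_nonneg_of_mem_Icc (hE hφ))

lemma setOf_sq_add_sq_le_sq_inter_polarSector {R : ℝ} (hR : 0 ≤ R) (E : Set ℝ) :
    {p : ℝ × ℝ | p.1 ^ 2 + p.2 ^ 2 ≤ R ^ 2} ∩ polarSector E =
      polarCoord.symm '' (Icc 0 R ×ˢ E) := by
  have hnorm (ρ φ : ℝ) :
      (polarCoord.symm (ρ, φ)).1 ^ 2 + (polarCoord.symm (ρ, φ)).2 ^ 2 = ρ ^ 2 := by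
    simp only [polarCoord_symm_apply]
    linear_combination ρ ^ 2 * cos_sq_add_sin_sq φ
  ext p
  constructor
  · rintro ⟨hp, ⟨ρ, φ⟩, ⟨hρ, hφ⟩, rfl⟩
    rw [mem_ofPred_eq, hnorm] at hp
    exact ⟨(ρ, φ), ⟨⟨hρ, (pow_le_pow_iff_left₀ hρ hR two_ne_zero).1 hp⟩, hφ⟩, rfl⟩
  · rintro ⟨⟨ρ, φ⟩, ⟨hρ, hφ⟩, rfl⟩
    refine ⟨?_, (ρ, φ), ⟨hρ.1, hφ⟩, rfl⟩
    rw [mem_ofPred_eq, hnorm]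
    exact pow_le_pow_left₀ hρ.1 hρ.2 2

lemma volume_setOf_sq_add_sq_le_inter_polarSector (t : ℝ) {E : Set ℝ}
    (hE : MeasurableSet E) (hEπ : E ⊆ Ioo (-π) π) :
    volume ({p : ℝ × ℝ | p.1 ^ 2 + p.2 ^ 2 ≤ t} ∩ polarSector E) =
      ENNReal.ofReal t * (volume E / 2) := by
  rcases lt_or_ge t 0 with ht | ht
  · have hempty : {p : ℝ × ℝ | p.1 ^ 2 + p.2 ^ 2 ≤ t} = ∅ :=
      eq_empty_of_forall_notMem fun p hp ↦ by
        nlinarith [sq_nonneg p.1, sq_nonneg p.2, hp.out]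
    rw [hempty, empty_inter, measure_empty, ENNReal.ofReal_of_nonpos ht.le, zero_mul]
  have hR := sqrt_nonneg t
  rw [← sq_sqrt ht, setOf_sq_add_sq_le_sq_inter_polarSector hR]
  have hsub : polarCoord.symm '' (Icc 0 √t ×ˢ E) ⊆
      insert 0 (polarCoord.symm '' (Ioc 0 √t ×ˢ E)) := by
    rintro _ ⟨⟨ρ, φ⟩, ⟨hρ, hφ⟩, rfl⟩
    rcases hρ.1.eq_or_lt with rfl | hρ0
    · left; simp
    · exact Or.inr ⟨(ρ, φ), ⟨⟨hρ0, hρ.2⟩, hφ⟩, rfl⟩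
  rw [le_antisymm ((measure_mono hsub).trans_eq (measure_congr (insert_ae_eq_self _ _)))
    (measure_mono (image_mono (prod_mono Ioc_subset_Icc_self le_rfl))),
    volume_polarCoord_symm_image_Ioc_prod hR hE hEπ, ENNReal.ofReal_div_of_pos two_pos,
    ENNReal.ofReal_ofNat]
  simp only [div_eq_mul_inv]
  ring

def cylSplit (x : EuclideanSpace ℝ (Fin 3)) : ℝ × (ℝ × ℝ) := (x 2, (x 0, x 1))

lemma measurePreserving_cylSplit : MeasurePreserving cylSplit :=
  ((MeasurePreserving.id volume).prod (volume_preserving_finTwoArrow ℝ)).comp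
    ((volume_preserving_piFinSuccAbove (fun _ : Fin 3 ↦ ℝ) 2).comp
      (EuclideanSpace.volume_preserving_symm_measurableEquiv_toLp (Fin 3)))

lemma lintegral_ofReal_one_sub_sq :
    ∫⁻ z : ℝ, ENNReal.ofReal (1 - z ^ 2) = ENNReal.ofReal (4 / 3) := by
  have hsupp : (fun z : ℝ ↦ ENNReal.ofReal (1 - z ^ 2)).support ⊆ Icc (-1) 1 := by
    intro z hz
    rw [Function.mem_support, ne_eq, ENNReal.ofReal_eq_zero, not_le, sub_pos,
      sq_lt_one_iff_abs_lt_one] at hz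
    exact ⟨by linarith [neg_abs_le z], by linarith [le_abs_self z]⟩
  rw [← setLIntegral_eq_of_support_subset hsupp, ← ofReal_integral_eq_lintegral_ofReal
    (by fun_prop : Continuous fun z : ℝ ↦ 1 - z ^ 2).integrableOn_Icc
    (ae_restrict_of_forall_mem measurableSet_Icc fun z (hz : z ∈ Icc (-1) 1) ↦ by
      simp only [Pi.zero_apply, sub_nonneg, sq_le_one_iff_abs_le_one, abs_le]; exact hz),
    integral_Icc_eq_integral_Ioc, ← intervalIntegral.integral_of_le (by norm_num),
    intervalIntegral.integral_sub intervalIntegrable_const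
      (intervalIntegral.intervalIntegrable_pow 2),
    integral_pow]
  norm_num

lemma volume_closedBall_inter_cylinder {C : Set (ℝ × ℝ)}
    (hC : MeasurableSet ({p : ℝ × ℝ | p.1 ^ 2 + p.2 ^ 2 ≤ 1} ∩ C)) {K : ℝ≥0∞}
    (hK : ∀ t, volume ({p : ℝ × ℝ | p.1 ^ 2 + p.2 ^ 2 ≤ t} ∩ C) = ENNReal.ofReal t * K) :
    volume {x : EuclideanSpace ℝ (Fin 3) | x ∈ closedBall 0 1 ∧ (x 0, x 1) ∈ C} =
      ENNReal.ofReal (4 / 3) * K := by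
  set s : Set (ℝ × (ℝ × ℝ)) :=
    {q | q.2.1 ^ 2 + q.2.2 ^ 2 + q.1 ^ 2 ≤ 1} ∩ Prod.snd ⁻¹' ({p | p.1 ^ 2 + p.2 ^ 2 ≤ 1} ∩ C)
  have hs : MeasurableSet s :=
    (measurableSet_le (by fun_prop) measurable_const).inter (measurable_snd hC)
  have hpre : {x : EuclideanSpace ℝ (Fin 3) | x ∈ closedBall 0 1 ∧ (x 0, x 1) ∈ C} =
      cylSplit ⁻¹' s := by
    ext x
    simp only [s, cylSplit, mem_closedBall_zero_iff, EuclideanSpace.norm_eq, Fin.sum_univ_three,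
      Real.norm_eq_abs, sq_abs, mem_preimage, mem_inter_iff, mem_ofPred_eq, sqrt_le_one]
    exact ⟨fun ⟨h, hx⟩ ↦ ⟨h, by nlinarith [sq_nonneg (x 2)], hx⟩, fun ⟨h, _, hx⟩ ↦ ⟨h, hx⟩⟩
  have hslice (z : ℝ) : Prod.mk z ⁻¹' s = {p : ℝ × ℝ | p.1 ^ 2 + p.2 ^ 2 ≤ 1 - z ^ 2} ∩ C := by
    ext p
    simp only [s, mem_preimage, mem_inter_iff, mem_ofPred_eq]
    constructor
    · rintro ⟨h, -, hp⟩; exact ⟨by linarith, hp⟩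
    · rintro ⟨h, hp⟩; exact ⟨by linarith, by nlinarith [sq_nonneg z], hp⟩
  rw [hpre, measurePreserving_cylSplit.measure_preimage hs.nullMeasurableSet,
    Measure.volume_eq_prod, Measure.prod_apply hs]
  simp_rw [hslice, hK]
  rw [lintegral_mul_const _ (by fun_prop), lintegral_ofReal_one_sub_sq]

lemma volume_closedBall_inter_polarSector_cylinder {E : Set ℝ} (hE : IsCompact E)
    (hEπ : E ⊆ Ioo (-π) π) :
    volume {x : EuclideanSpace ℝ (Fin 3) | x ∈ closedBall 0 1 ∧ (x 0, x 1) ∈ polarSector E} =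
      ENNReal.ofReal (4 / 3) * (volume E / 2) := by
  refine volume_closedBall_inter_cylinder ?_
    fun t ↦ volume_setOf_sq_add_sq_le_inter_polarSector t hE.measurableSet hEπ
  rw [← one_pow 2, setOf_sq_add_sq_le_sq_inter_polarSector zero_le_one]
  exact ((isCompact_Icc.prod hE).image continuous_polarCoord_symm).isClosed.measurableSet

lemma volume_wedge {θ : ℝ} (hθ₀ : 0 ≤ θ) (hθπ : θ < π) :
    volume {x : EuclideanSpace ℝ (Fin 3) |
        x ∈ closedBall 0 1 ∧ (x 0, x 1) ∈ polarSector (Icc 0 θ)} = ENNReal.ofReal (2 * θ / 3) := by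
  rw [volume_closedBall_inter_polarSector_cylinder isCompact_Icc
    (fun φ hφ ↦ ⟨by linarith [hφ.1, pi_pos], hφ.2.trans_lt hθπ⟩), volume_Icc, sub_zero,
    ← ENNReal.ofReal_ofNat 2, ← ENNReal.ofReal_div_of_pos two_pos,
    ← ENNReal.ofReal_mul (by norm_num)]
  ring_nf

lemma volume_halfBall_fin_three {n : EuclideanSpace ℝ (Fin 3)} (hn : n ≠ 0) :
    volume ({x | ⟪n, x⟫ ≤ 0} ∩ closedBall 0 1) = ENNReal.ofReal (2 * π / 3) := by
  rw [addHaar_setOf_inner_nonpos_inter_closedBall volume hn,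
    EuclideanSpace.volume_closedBall_fin_three, ENNReal.ofReal_one, one_pow, one_mul,
    ← ENNReal.ofReal_ofNat 2, ← ENNReal.ofReal_div_of_pos two_pos]
  ring_nf

/-- Let `B` be the closed unit ball in `ℝ³`, `α = arccos(1/3)/(2π)`, and `W₀` the centered
wedge of dihedral angle `2πα = arccos(1/3)` with edge along the third coordinate axis
(polar angle of the first two coordinates in `[0, arccos(1/3)]`).  For every `W` which is
the intersection of `B` with at most two closed half-spaces, whose interior is disjoint
from `W₀` and does not contain the center, `vol(W₀ ∪ W) ≤ (α + 1/2)·vol(B)`; moreover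
equality is achieved by some such `W`.  Hence the minimum missing volume fraction for a
centered wedge plus one more wedge or cap is exactly `1/2 − α`. -/
theorem stmt16 (α : ℝ) (hα : α = arccos (1 / 3) / (2 * π))
    (B W₀ : Set (EuclideanSpace ℝ (Fin 3)))
    (hB : B = closedBall (0 : EuclideanSpace ℝ (Fin 3)) 1)
    (hW₀ : W₀ = {x : EuclideanSpace ℝ (Fin 3) | x ∈ B ∧
      ∃ ρ φ : ℝ, 0 ≤ ρ ∧ 0 ≤ φ ∧ φ ≤ arccos (1 / 3) ∧
        x 0 = ρ * cos φ ∧ x 1 = ρ * sin φ}) :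
    (∀ (n₁ n₂ : EuclideanSpace ℝ (Fin 3)) (c₁ c₂ : ℝ)
        (W : Set (EuclideanSpace ℝ (Fin 3))),
      W = {x | inner ℝ n₁ x ≤ c₁} ∩ {x | inner ℝ n₂ x ≤ c₂} ∩ B →
      Disjoint (interior W) W₀ →
      (0 : EuclideanSpace ℝ (Fin 3)) ∉ interior W →
      volume (W₀ ∪ W) ≤ ENNReal.ofReal ((α + 1 / 2) * (4 * π / 3))) ∧
    (∃ (n₁ n₂ : EuclideanSpace ℝ (Fin 3)) (c₁ c₂ : ℝ)
        (W : Set (EuclideanSpace ℝ (Fin 3))),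
      W = {x | inner ℝ n₁ x ≤ c₁} ∩ {x | inner ℝ n₂ x ≤ c₂} ∩ B ∧
      Disjoint (interior W) W₀ ∧
      (0 : EuclideanSpace ℝ (Fin 3)) ∉ interior W ∧
      volume (W₀ ∪ W) = ENNReal.ofReal ((α + 1 / 2) * (4 * π / 3))) := by
  subst hB hα
  have hθ₀ : 0 ≤ arccos (1 / 3) := arccos_nonneg _
  have hθπ : arccos (1 / 3) < π := arccos_lt_pi.2 (by norm_num)
  generalize arccos (1 / 3) = θ at hθ₀ hθπ hW₀ ⊢
  replace hW₀ : W₀ = {x | x ∈ closedBall 0 1 ∧ (x 0, x 1) ∈ polarSector (Icc 0 θ)} := by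
    simp only [hW₀, mem_polarSector, mem_Icc, and_assoc]
  have hvol : volume W₀ + ENNReal.ofReal (2 * π / 3) =
      ENNReal.ofReal ((θ / (2 * π) + 1 / 2) * (4 * π / 3)) := by
    rw [hW₀, volume_wedge hθ₀ hθπ, ← ENNReal.ofReal_add (by positivity) (by positivity)]
    congr 1
    field_simp
    norm_num
  set e : EuclideanSpace ℝ (Fin 3) := EuclideanSpace.single 1 1
  have he : e ≠ 0 := by simp [e]
  have hW₀e : W₀ ⊆ {x | 0 ≤ ⟪e, x⟫} := by
    rw [hW₀]
    intro x hx
    simpa [e, EuclideanSpace.inner_single_left] using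
      polarSector_subset_setOf_snd_nonneg (Icc_subset_Icc_right hθπ.le) hx.2
  refine ⟨fun n₁ n₂ c₁ c₂ W hW _ h0 ↦ ?_, e, e, 0, 0, _, rfl, ?_⟩
  · obtain ⟨m, hm, hsub⟩ := exists_subset_halfBall_of_zero_notMem_interior one_pos (hW ▸ h0)
    calc volume (W₀ ∪ W) ≤ volume W₀ + volume W := measure_union_le _ _
      _ ≤ volume W₀ + volume ({x | ⟪m, x⟫ ≤ 0} ∩ closedBall 0 1) := by
          gcongr
          exact hW ▸ hsub
      _ = _ := by rw [volume_halfBall_fin_three hm, hvol]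
  rw [inter_self]
  refine ⟨disjoint_interior_setOf_inner_nonpos_inter he hW₀e _,
    disjoint_singleton_right.1 (disjoint_interior_setOf_inner_nonpos_inter he (by simp) _), ?_⟩
  rw [addHaar_union_setOf_inner_nonpos_inter volume he hW₀e measurableSet_closedBall,
    volume_halfBall_fin_three he, hvol]
end
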